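/- arXiv:1407.5782 — 4 statements merged into one kernel-verified Lean document; each statement's English description precedes it below -/
import Mathlib

section
/- Let A be an a.i.c. integral domain and let p ⊆ A be a prime ideal. Then the quotient A/p is again an a.i.c. integral domain. -/
/-!
A domain is a.i.c. exactly when every monic polynomial over it splits into linear factors.
If `A` is a.i.c., a monic `f` splits over `Frac A`, and its roots there are integral over `A`,
hence lie in `A`. Conversely, an element integral over `A` is a root of a split monic polynomial,
so it lies in `A`; and an element algebraic over `Frac A` has a nonzero multiple integral over
`A`, so it lies in `Frac A`. Splitting of monic polynomials passes to quotients, because monic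
polynomials lift along surjections to monic polynomials.
-/

open Polynomial

def MonicSplits (R : Type*) [CommRing R] : Prop :=
  ∀ f : R[X], f.Monic → f.Splits

namespace MonicSplits

theorem of_isAlgClosed (A K : Type*) [CommRing A] [IsDomain A] [IsIntegrallyClosed A]
    [Field K] [Algebra A K] [IsFractionRing A K] [IsAlgClosed K] : MonicSplits A :=
  fun f hf ↦ .of_splits_map_of_injective (IsFractionRing.injective A K) (IsAlgClosed.splits _)
    fun _ ha ↦ IsIntegrallyClosed.isIntegral_iff.mp
      ⟨f, hf, by simpa [aeval_def] using (mem_roots'.mp ha).2⟩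

theorem of_surjective {R S : Type*} [CommRing R] [CommRing S] (h : MonicSplits R)
    {φ : R →+* S} (hφ : Function.Surjective φ) : MonicSplits S := by
  intro f hf
  obtain ⟨g, rfl, -, hg⟩ := lifts_and_natDegree_eq_and_monic (map_surjective φ hφ f) hf
  exact (h g hg).map φ

variable {R : Type*} [CommRing R]

theorem mem_range_of_isIntegral (h : MonicSplits R) {S : Type*} [CommRing S] [IsDomain S]
    [Algebra R S] {x : S} (hx : IsIntegral R x) : x ∈ (algebraMap R S).range := by
  obtain ⟨f, hf, hfx⟩ := hx
  obtain ⟨m, hm⟩ := splits_iff_exists_multiset.mp (h f hf)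
  rw [← aeval_def, hm, hf.leadingCoeff, C_1, one_mul, map_multiset_prod, Multiset.map_map,
    Multiset.prod_eq_zero_iff] at hfx
  obtain ⟨r, -, hr⟩ := Multiset.mem_map.mp hfx
  exact ⟨r, (sub_eq_zero.mp (by simpa using hr)).symm⟩

variable [IsDomain R]

theorem isIntegrallyClosed (h : MonicSplits R) : IsIntegrallyClosed R :=
  (isIntegrallyClosed_iff (FractionRing R)).mpr fun hx ↦ h.mem_range_of_isIntegral hx

variable (K : Type*) [Field K] [Algebra R K] [IsFractionRing R K]

theorem mem_range_of_isAlgebraic (h : MonicSplits R) {L : Type*} [Field L] [Algebra R L]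
    [Algebra K L] [IsScalarTower R K L] {x : L} (hx : IsAlgebraic K x) :
    x ∈ (algebraMap K L).range := by
  obtain ⟨y, hy, hyx⟩ :=
    ((IsFractionRing.isAlgebraic_iff R K L).mpr hx).exists_integral_multiple
  obtain ⟨r, hr⟩ := h.mem_range_of_isIntegral hyx
  have hy' : algebraMap K L (algebraMap R K y) ≠ 0 := by simpa using hy
  refine ⟨algebraMap R K r / algebraMap R K y, ?_⟩
  rw [map_div₀, ← IsScalarTower.algebraMap_apply, hr, Algebra.smul_def,
    IsScalarTower.algebraMap_apply R K L, mul_div_cancel_left₀ _ hy']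

theorem isAlgClosed (h : MonicSplits R) : IsAlgClosed K := by
  let L := AlgebraicClosure K
  have hsurj : Function.Surjective (algebraMap K L) :=
    fun x ↦ h.mem_range_of_isAlgebraic K (Algebra.IsAlgebraic.isAlgebraic x)
  exact IsAlgClosed.of_ringEquiv L K
    (RingEquiv.ofBijective _ ⟨(algebraMap K L).injective, hsurj⟩).symm

end MonicSplits

/-- If `A` is an a.i.c. integral domain (integrally closed with algebraically closed
fraction field) and `p ⊆ A` is a prime ideal, then `A ⧸ p` is again an a.i.c. integral
domain. -/
theorem quotient_by_prime_aic {A : Type} [CommRing A] [IsDomain A] [IsIntegrallyClosed A]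
    [IsAlgClosed (FractionRing A)] (p : Ideal A) [p.IsPrime] :
    IsDomain (A ⧸ p) ∧ IsIntegrallyClosed (A ⧸ p) ∧ IsAlgClosed (FractionRing (A ⧸ p)) := by
  have hsplits : MonicSplits (A ⧸ p) :=
    (MonicSplits.of_isAlgClosed A (FractionRing A)).of_surjective Ideal.Quotient.mk_surjective
  exact ⟨inferInstance, hsplits.isIntegrallyClosed, hsplits.isAlgClosed _⟩
end

section
/- Let A be an a.i.c. integral domain and let B ⊆ A be a subring that is integrally closed in A. Then B is an a.i.c. integral domain. -/
/-!
`B` is integrally closed in `Frac A`, since integral closedness is transitive along `B ⊆ A ⊆ Frac A`.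
An element `α ∈ Frac A` algebraic over `Frac B` has a multiple `y • α`, `0 ≠ y ∈ B`, integral over
`B`, hence `y • α ∈ B` and `α ∈ Frac B`. So `Frac B` is its own algebraic closure in the
algebraically closed field `Frac A`, and is therefore algebraically closed.
-/

open IntermediateField

theorem IsIntegrallyClosedIn.algebraicClosure_eq_bot (R : Type*) {K L : Type*} [CommRing R]
    [IsDomain R] [Field K] [Field L] [Algebra R K] [IsFractionRing R K] [Algebra R L]
    [Algebra K L] [IsScalarTower R K L] [IsIntegrallyClosedIn R L] :
    algebraicClosure K L = ⊥ := by
  refine eq_bot_iff.mpr fun α hα => ?_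
  have hαR : IsAlgebraic R α :=
    (IsFractionRing.isAlgebraic_iff R K L).mpr (mem_algebraicClosure_iff.mp hα)
  obtain ⟨y, hy, hyα⟩ := hαR.exists_integral_multiple
  obtain ⟨c, hc⟩ := IsIntegrallyClosedIn.isIntegral_iff.mp hyα
  have hyK : algebraMap R K y ≠ 0 := (map_ne_zero_iff _ (IsFractionRing.injective R K)).mpr hy
  have hyL : algebraMap R L y ≠ 0 := by
    rw [IsScalarTower.algebraMap_apply R K L]
    exact (map_ne_zero _).mpr hyK
  refine mem_bot.mpr ⟨algebraMap R K c / algebraMap R K y, ?_⟩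
  rw [map_div₀, ← IsScalarTower.algebraMap_apply, ← IsScalarTower.algebraMap_apply, hc,
    Algebra.smul_def, mul_div_cancel_left₀ α hyL]

theorem IsIntegrallyClosedIn.isAlgClosed_fractionRing (R L : Type*) [CommRing R] [IsDomain R]
    [Field L] [IsAlgClosed L] [Algebra R L] [FaithfulSMul R L] [IsIntegrallyClosedIn R L] :
    IsAlgClosed (FractionRing R) :=
  letI := FractionRing.liftAlgebra R L
  (IsAlgClosed.algebraicClosure_eq_bot_iff _ L).mp (algebraicClosure_eq_bot R)

/-- If `A` is an a.i.c. integral domain and `B ⊆ A` is a subring that is integrally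
closed in `A` (every element of `A` integral over `B` lies in `B`), then `B` is an
a.i.c. integral domain. -/
theorem subring_integrally_closed_aic {A : Type} [CommRing A] [IsDomain A]
    [IsIntegrallyClosed A] [IsAlgClosed (FractionRing A)] (B : Subring A)
    (hB : ∀ x : A, IsIntegral B x → x ∈ B) :
    IsIntegrallyClosed B ∧ IsAlgClosed (FractionRing B) := by
  have : IsIntegrallyClosedIn B A := Subring.isIntegrallyClosedIn_iff.mpr hB
  have : IsIntegrallyClosedIn B (FractionRing A) :=
    .of_isIntegralClosure_of_isIntegrallyClosedIn B B A _
  exact ⟨.of_isIntegrallyClosedIn B (FractionRing A),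
    IsIntegrallyClosedIn.isAlgClosed_fractionRing B (FractionRing A)⟩
end

section
/- Let R be a commutative ring such that every finite flat surjective R-algebra admits an R-algebra retraction. Then for every prime ideal p of R, the fraction field of R/p is algebraically closed. -/
/-- If `R` is a commutative ring such that every finite flat `R`-algebra whose
spectrum surjects onto `Spec R` admits an `R`-algebra retraction, then for every
prime ideal `p` of `R` the fraction field of `R ⧸ p` is algebraically closed. -/
theorem residue_fraction_fields_algClosed {R : Type} [CommRing R]
    (h : ∀ (B : Type) [CommRing B] [Algebra R B], Module.Finite R B → Module.Flat R B →
      Function.Surjective (PrimeSpectrum.comap (algebraMap R B)) →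
      Nonempty (B →ₐ[R] R))
    (p : Ideal R) [p.IsPrime] :
    IsAlgClosed (FractionRing (R ⧸ p)) := by
  set A := R ⧸ p
  set K := FractionRing A
  set φ : A →+* K := algebraMap A K with hφ
  have hφinj : Function.Injective φ := IsFractionRing.injective A K
  apply IsAlgClosed.of_exists_root
  intro f hfm hfirr
  -- clear denominators
  obtain ⟨b, hb⟩ :=
    IsLocalization.integerNormalization_map_to_map (nonZeroDivisors A) f
  set p₀ : Polynomial A := IsLocalization.integerNormalization (nonZeroDivisors A) f with hp₀
  have hφb : φ (b : A) ≠ 0 :=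
    IsFractionRing.to_map_ne_zero_of_mem_nonZeroDivisors b.2
  have hbf : (b : A) • f = Polynomial.C (φ (b : A)) * f := by
    rw [← Polynomial.smul_eq_C_mul, algebra_compatible_smul K (b : A) f]
  have hmapdeg : (p₀.map φ).natDegree = f.natDegree := by
    rw [hb, hbf, Polynomial.natDegree_C_mul hφb]
  have hfdeg : 1 ≤ f.natDegree := hfirr.natDegree_pos
  have hp₀deg : 1 ≤ p₀.natDegree :=
    le_trans (hmapdeg ▸ hfdeg) Polynomial.natDegree_map_le
  have hp₀ne : p₀ ≠ 0 := by
    intro h0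
    rw [h0] at hmapdeg
    simp at hmapdeg
    omega
  set q : Polynomial A := p₀.integralNormalization with hq
  have hqmonic : q.Monic := Polynomial.monic_integralNormalization hp₀ne
  have hqdeg : q.natDegree = p₀.natDegree :=
    Polynomial.natDegree_integralNormalization
  -- lift q to a monic polynomial over R
  set π : R →+* A := Ideal.Quotient.mk p with hπ
  have hqlifts : q ∈ Polynomial.lifts π := by
    rw [Polynomial.lifts_iff_coeff_lifts]
    exact fun n => Ideal.Quotient.mk_surjective (q.coeff n)
  obtain ⟨g, hgmap, hgdeg, hgmonic⟩ :=
    Polynomial.lifts_and_degree_eq_and_monic hqlifts hqmonic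
  have hgnatdeg : g.natDegree = q.natDegree := by
    rw [← hgmap]; exact (Polynomial.natDegree_map_eq_iff.mpr
      (Or.inl (by simp [hgmonic.leadingCoeff]))).symm
  -- the finite flat algebra
  set B := AdjoinRoot g with hB
  have pb : PowerBasis R B := AdjoinRoot.powerBasis' hgmonic
  haveI : Module.Free R B := Module.Free.of_basis pb.basis
  haveI hfin : Module.Finite R B := Module.Finite.of_basis pb.basis
  haveI hflat : Module.Flat R B := inferInstance
  have hginj : Function.Injective (algebraMap R B) := by
    rw [injective_iff_map_eq_zero]
    intro r hr
    by_contra hr0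
    have hCr : (Polynomial.C r : Polynomial R) ≠ 0 := by simpa using hr0
    have hd : (Polynomial.C r).degree < g.degree := by
      apply lt_of_le_of_lt Polynomial.degree_C_le
      rw [← Polynomial.natDegree_pos_iff_degree_pos]
      omega
    exact AdjoinRoot.mk_ne_zero_of_degree_lt hgmonic hCr hd hr
  haveI : Algebra.IsIntegral R B := Algebra.IsIntegral.of_finite R B
  have hsurj : Function.Surjective (PrimeSpectrum.comap (algebraMap R B)) := by
    intro x
    have hker : (⊥ : Ideal B).comap (algebraMap R B) ≤ x.asIdeal := by
      have : (⊥ : Ideal B).comap (algebraMap R B) = ⊥ := by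
        rw [← RingHom.ker_eq_comap_bot]
        exact (RingHom.injective_iff_ker_eq_bot _).mp hginj
      rw [this]; exact bot_le
    obtain ⟨Q, -, hQprime, hQ⟩ :=
      Ideal.exists_ideal_over_prime_of_isIntegral x.asIdeal ⊥ hker
    exact ⟨⟨Q, hQprime⟩, PrimeSpectrum.ext hQ⟩
  -- get the retraction and the root in R
  obtain ⟨ψ⟩ := h B hfin hflat hsurj
  set r : R := ψ (AdjoinRoot.root g) with hr
  have hroot : Polynomial.aeval r g = 0 := by
    rw [hr, Polynomial.aeval_algHom_apply, AdjoinRoot.aeval_eq, AdjoinRoot.mk_self, map_zero]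
  -- transfer the root to K
  set ρ : R →+* K := φ.comp π with hρ
  have hρroot : Polynomial.eval₂ ρ (ρ r) g = 0 := by
    rw [Polynomial.eval₂_at_apply]
    have : g.eval r = Polynomial.aeval r g := by rw [Polynomial.coe_aeval_eq_eval]
    rw [show g.eval r = 0 from by
      simpa [Polynomial.aeval_def, Polynomial.eval₂_eq_eval_map] using hroot]
    exact map_zero ρ
  have hqroot : Polynomial.eval₂ φ (ρ r) q = 0 := by
    rw [← hgmap, Polynomial.eval₂_map]
    exact hρroot
  -- unwind the integral normalization
  set c : A := p₀.leadingCoeff with hc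
  have hcne : φ c ≠ 0 := fun h0 => hp₀ne (Polynomial.leadingCoeff_eq_zero.mp (hφinj (by simpa using h0)))
  set x : K := ρ r / φ c with hx
  have hcx : φ c * x = ρ r := mul_div_cancel₀ _ hcne
  have hkey := Polynomial.integralNormalization_eval₂_leadingCoeff_mul hp₀deg φ x
  rw [hcx, ← hq, hqroot] at hkey
  have hp₀root : Polynomial.eval₂ φ x p₀ = 0 := by
    have hpow : φ c ^ (p₀.natDegree - 1) ≠ 0 := pow_ne_zero _ hcne
    exact (mul_eq_zero.mp hkey.symm).resolve_left hpow
  -- conclude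
  have : Polynomial.eval x (p₀.map φ) = 0 := by
    rw [Polynomial.eval_map]; exact hp₀root
  rw [hb, hbf] at this
  simp only [Polynomial.eval_mul, Polynomial.eval_C] at this
  exact ⟨x, (mul_eq_zero.mp this).resolve_left hφb⟩
end

section
/- Let R be a strictly henselian local ring in the sense that every jointly surjective finite family of étale ring maps R → B_i of finite presentation admits an R-algebra retraction B_i → R for some i. Then the residue field of R is separably closed. (Partial converse direction of the classical characterization.) -/
/-!
Lift a monic separable irreducible `p̄` over the residue field `κ` to a monic `f` over `R` and
take the standard étale algebra `(R[X]/(f))[1/f']`. The root of `p̄` in `κ[X]/(p̄)` gives it a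
point over the closed point, and étale algebras are flat, hence satisfy going down, so it covers
all of `Spec R`. A retraction to `R` sends `X` to a root of `f`, whose residue is a root of `p̄`;
so `κ` is separably closed.
-/

open Polynomial IsLocalRing

section ClosedPoint

variable {R S : Type*} [CommRing R] [IsLocalRing R] [CommRing S] [Algebra R S]

lemma IsLocalRing.closedPoint_mem_range_comap_of_algHom {K : Type*} [CommRing K] [Nontrivial K]
    [Algebra R K] [Algebra (ResidueField R) K] [IsScalarTower R (ResidueField R) K]
    (φ : S →ₐ[R] K) : closedPoint R ∈ Set.range (PrimeSpectrum.comap (algebraMap R S)) := by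
  obtain ⟨x⟩ : Nonempty (PrimeSpectrum K) := inferInstance
  refine ⟨PrimeSpectrum.comap (φ : S →+* K) x, ?_⟩
  rw [← PrimeSpectrum.comap_comp_apply, φ.comp_algebraMap, IsScalarTower.algebraMap_eq R
    (ResidueField R) K, PrimeSpectrum.comap_comp_apply, ResidueField.algebraMap_eq,
    PrimeSpectrum.comap_residue]

-- Every prime of a local ring is a generalization of the closed point.
lemma IsLocalRing.comap_surjective_of_closedPoint_mem_range [Algebra.HasGoingDown R S]
    (h : closedPoint R ∈ Set.range (PrimeSpectrum.comap (algebraMap R S))) :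
    Function.Surjective (PrimeSpectrum.comap (algebraMap R S)) := by
  obtain ⟨Q, hQ⟩ := h
  intro p
  obtain ⟨Q', -, hQ'⟩ := Algebra.HasGoingDown.iff_generalizingMap_primeSpectrumComap.mp
    inferInstance (hQ ▸ specializes_closedPoint p)
  exact ⟨Q', hQ'⟩

end ClosedPoint

namespace StandardEtalePair

variable {R : Type*} [CommRing R]

noncomputable def ofMonic (f : R[X]) (hf : f.Monic) : StandardEtalePair R where
  f := f
  monic_f := hf
  g := derivative f
  cond := ⟨1, 0, 1, by simp⟩

lemma hasMap_ofMonic_root {f : R[X]} (hf : f.Monic) {A : Type*} [CommRing A] [Algebra R A]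
    (hsep : (f.map (algebraMap R A)).Separable) :
    (ofMonic f hf).HasMap (AdjoinRoot.root (f.map (algebraMap R A))) := by
  refine ⟨?_, ?_⟩
  · rw [ofMonic, ← aeval_map_algebraMap A, AdjoinRoot.aeval_eq, AdjoinRoot.mk_self]
  · rw [ofMonic, ← aeval_map_algebraMap A, ← derivative_map, AdjoinRoot.aeval_eq,
      ← isCoprime_zero_left, ← AdjoinRoot.mk_self]
    exact IsCoprime.map hsep _

lemma comap_surjective_ofMonic [IsLocalRing R] {f : R[X]} (hf : f.Monic)
    (hdeg : (f.map (algebraMap R (ResidueField R))).degree ≠ 0)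
    (hsep : (f.map (algebraMap R (ResidueField R))).Separable) :
    Function.Surjective (PrimeSpectrum.comap (algebraMap R (ofMonic f hf).Ring)) :=
  have := AdjoinRoot.nontrivial _ hdeg
  comap_surjective_of_closedPoint_mem_range
    (closedPoint_mem_range_comap_of_algHom ((ofMonic f hf).lift _ (hasMap_ofMonic_root hf hsep)))

end StandardEtalePair

/-- Let `R` be a local ring which is "strictly henselian" in the sense that for every
finite family of étale `R`-algebras of finite presentation `B_1, …, B_n` which
jointly cover `Spec R`, some `B_i` admits an `R`-algebra retraction.  Then the
residue field of `R` is separably closed: it has no nontrivial finite separable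
field extensions. -/
theorem residueField_separablyClosed_of_etale_covers_split {R : Type} [CommRing R]
    [IsLocalRing R]
    (h : ∀ (n : ℕ) (B : Fin n → Type) [∀ i, CommRing (B i)] [∀ i, Algebra R (B i)],
      (∀ i, Algebra.Etale R (B i)) →
      (∀ p : PrimeSpectrum R, ∃ (i : Fin n) (q : PrimeSpectrum (B i)),
        PrimeSpectrum.comap (algebraMap R (B i)) q = p) →
      ∃ i, Nonempty (B i →ₐ[R] R)) :
    ∀ (L : Type) [Field L] [Algebra (IsLocalRing.ResidueField R) L]
      [Algebra.IsSeparable (IsLocalRing.ResidueField R) L]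
      [Module.Finite (IsLocalRing.ResidueField R) L],
      Function.Bijective (algebraMap (IsLocalRing.ResidueField R) L) := by
  intro L _ _ _ _
  suffices IsSepClosed (ResidueField R) from IsSepClosed.algebraMap_bijective _ _
  refine IsSepClosed.of_exists_root _ fun p hp hirr hsep ↦ ?_
  obtain ⟨f, rfl, -, hf⟩ := lifts_and_degree_eq_and_monic
    (map_surjective _ residue_surjective p) hp
  let P := StandardEtalePair.ofMonic f hf
  have hcover := StandardEtalePair.comap_surjective_ofMonic hf
    (degree_pos_of_irreducible hirr).ne' hsep
  obtain ⟨-, ⟨φ⟩⟩ := h 1 (fun _ ↦ P.Ring) (fun _ ↦ inferInstance) fun q ↦ ⟨0, hcover q⟩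
  have hroot : aeval (φ P.X) f = 0 := (P.hasMap_X.map φ).1
  refine ⟨residue R (φ P.X), ?_⟩
  rw [← ResidueField.algebraMap_eq, eval_map_algebraMap, aeval_algebraMap_apply, hroot, map_zero]
end
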